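/- Under fully-connected drone mobility on f ≥ 2 cells, the unique solution x of Mx = −1 satisfies x₁ = f/λ_d and x_i = f/λ_d + (f−1)/λ_m for all i ∈ {2,…,f}, where M is the matrix with M₁₁ = −λ_m − λ_d, M_ii = −λ_m for i ≥ 2, and off-diagonal entries λ_m/(f−1), with λ_m, λ_d > 0. -/

import Mathlib

open Matrix

theorem stmt_6 (f : ℕ) (hf : 2 ≤ f) (lam_m lam_d : ℝ) (hm : 0 < lam_m) (hd : 0 < lam_d)
    (M : Matrix (Fin f) (Fin f) ℝ)
    (hM : M = fun i j =>
      if i = j then (if i = (⟨0, by omega⟩ : Fin f) then -(lam_m + lam_d) else -lam_m)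
      else lam_m / ((f : ℝ) - 1)) :
    (∃! x : Fin f → ℝ, M *ᵥ x = fun _ => (-1 : ℝ)) ∧
    ∀ x : Fin f → ℝ, M *ᵥ x = (fun _ => (-1 : ℝ)) →
      x ⟨0, by omega⟩ = (f : ℝ) / lam_d ∧
      ∀ i : Fin f, i ≠ (⟨0, by omega⟩ : Fin f) →
        x i = (f : ℝ) / lam_d + ((f : ℝ) - 1) / lam_m := by
  subst hM
  have hf2 : (2:ℝ) ≤ (f:ℝ) := by exact_mod_cast hf
  set e0 : Fin f := ⟨0, by omega⟩ with he0
  have hf1 : ((f:ℝ) - 1) ≠ 0 := by linarith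
  set c : ℝ := lam_m / ((f:ℝ)-1) with hc
  have hfm1 : (-1 + (f:ℝ)) ≠ 0 := by linarith
  have hcf : c * ((f:ℝ)-1) = lam_m := div_mul_cancel₀ lam_m hf1
  have hcpos : 0 < c := div_pos hm (by linarith)
  set d : Fin f → ℝ := fun i => if i = e0 then -(lam_m + lam_d) else -lam_m with hdd
  -- row formula
  have hrow : ∀ x : Fin f → ℝ, ∀ i,
      (((fun i j => if i = j then (if i = e0 then -(lam_m + lam_d) else -lam_m)
        else lam_m / ((f : ℝ) - 1)) : Matrix (Fin f) (Fin f) ℝ) *ᵥ x) i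
      = (d i - c) * x i + c * ∑ j, x j := by
    intro x i
    have h1 : ∀ j, (if i = j then (if i = e0 then -(lam_m + lam_d) else -lam_m)
        else lam_m / ((f : ℝ) - 1)) * x j
        = (if j = i then (d i - c) * x j else 0) + c * x j := by
      intro j
      by_cases h : i = j
      · subst h; by_cases h2 : i = e0 <;> simp [hdd, h2] <;> ring
      · simp [h, Ne.symm h, hc]
    simp only [mulVec, dotProduct]
    rw [Finset.sum_congr rfl (fun j _ => h1 j), Finset.sum_add_distrib,
      Finset.sum_ite_eq' Finset.univ i]
    simp [Finset.mul_sum]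
  -- key: values of any solution
  have key : ∀ x : Fin f → ℝ,
      (((fun i j => if i = j then (if i = e0 then -(lam_m + lam_d) else -lam_m)
        else lam_m / ((f : ℝ) - 1)) : Matrix (Fin f) (Fin f) ℝ) *ᵥ x) = (fun _ => (-1:ℝ)) →
      x e0 = (f:ℝ)/lam_d ∧ ∀ i, i ≠ e0 → x i = (f:ℝ)/lam_d + ((f:ℝ)-1)/lam_m := by
    intro x hx
    set S : ℝ := ∑ j, x j with hS
    have hr : ∀ i, (d i - c) * x i + c * S = -1 := by
      intro i; rw [← hrow x i]; exact congrFun hx i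
    -- sum of all rows
    have hsum : ∑ i : Fin f, ((d i - c) * x i + c * S) = ∑ _i : Fin f, (-1:ℝ) :=
      Finset.sum_congr rfl fun i _ => hr i
    have hsplit : ∀ i : Fin f, (d i - c) * x i
        = (-lam_m - c) * x i + (if i = e0 then -lam_d * x i else 0) := by
      intro i
      by_cases h : i = e0 <;> simp [hdd, h] <;> ring
    rw [Finset.sum_congr rfl (fun i _ => by rw [hsplit i])] at hsum
    rw [Finset.sum_add_distrib, Finset.sum_add_distrib, Finset.sum_ite_eq' Finset.univ e0,
      ← Finset.mul_sum, ← hS] at hsum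
    simp only [Finset.mem_univ, if_true, Finset.sum_const, Finset.card_univ,
      Fintype.card_fin, nsmul_eq_mul] at hsum
    -- hsum : (-lam_m - c) * S + -lam_d * x e0 + f * (c * S) = f * -1
    have hx0 : x e0 = (f:ℝ)/lam_d := by
      have hz : (-lam_m - c) * S + (f:ℝ) * (c * S) = ((c * ((f:ℝ)-1)) - lam_m) * S := by ring
      rw [hcf] at hz
      have h0 : lam_d * x e0 = (f:ℝ) := by nlinarith [hsum, hz]
      field_simp
      linarith [h0]
    refine ⟨hx0, fun i hi => ?_⟩
    have h1 := hr i
    have h2 := hr e0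
    simp only [hdd, hi, if_false, if_true] at h1 h2
    -- h1 : (-lam_m - c) * x i + c * S = -1 ; h2 : (-(lam_m+lam_d) - c) * x e0 + c*S = -1
    have hne : lam_m + c ≠ 0 := by positivity
    have hstep : (lam_m + c) * x i = (lam_m + lam_d + c) * x e0 := by nlinarith [h1, h2]
    rw [hx0] at hstep
    have hgoal : (lam_m + c) * ((f:ℝ)/lam_d + ((f:ℝ)-1)/lam_m)
        = (lam_m + lam_d + c) * ((f:ℝ)/lam_d) := by
      rw [hc]
      field_simp
      ring
    exact mul_left_cancel₀ hne (by rw [hstep, hgoal])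
  -- candidate solution
  set x0 : Fin f → ℝ := fun i => if i = e0 then (f:ℝ)/lam_d
    else (f:ℝ)/lam_d + ((f:ℝ)-1)/lam_m with hx0d
  have hS0 : ∑ j, x0 j = (f:ℝ) * ((f:ℝ)/lam_d + ((f:ℝ)-1)/lam_m) - ((f:ℝ)-1)/lam_m := by
    have : ∀ j : Fin f, x0 j = ((f:ℝ)/lam_d + ((f:ℝ)-1)/lam_m)
        + (if j = e0 then -(((f:ℝ)-1)/lam_m) else 0) := by
      intro j; by_cases h : j = e0 <;> simp [hx0d, h] <;> ring
    rw [Finset.sum_congr rfl (fun j _ => this j), Finset.sum_add_distrib,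
      Finset.sum_ite_eq' Finset.univ e0]
    simp [Finset.card_univ]
    ring
  have hsol : (((fun i j => if i = j then (if i = e0 then -(lam_m + lam_d) else -lam_m)
      else lam_m / ((f : ℝ) - 1)) : Matrix (Fin f) (Fin f) ℝ) *ᵥ x0) = (fun _ => (-1:ℝ)) := by
    funext i
    rw [hrow x0 i, hS0]
    by_cases h : i = e0
    · simp only [hx0d, hdd, h, if_true]
      rw [hc]
      field_simp
      ring
    · simp only [hx0d, hdd, h, if_false]
      rw [hc]
      field_simp
      ring
  refine ⟨⟨x0, hsol, fun y hy => ?_⟩, fun x hx => key x hx⟩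
  funext i
  obtain ⟨hy0, hyi⟩ := key y hy
  by_cases h : i = e0
  · rw [h, hy0]; simp [hx0d]
  · rw [hyi i h]; simp [hx0d, h]
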